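/- Let p ≥ 3 be prime, a, b ∈ E_p, and g(u) = a(b²u² + 1)/(b² + u²). Then g is a contraction on E_p: for all x, y ∈ E_p, |g(x) − g(y)|_p ≤ (1/p)|x − y|_p. -/

import Mathlib

/-!
Clearing denominators, `g x - g y = a (b⁴ - 1)(x - y)(x + y) / ((b² + x²)(b² + y²))`.
For `p` odd every factor except `b⁴ - 1` and `x - y` has norm at most one: `b² + z²` is within
distance `< 1` of `2`, a unit. Finally `b⁴ - 1 = (b - 1)(1 + b + b² + b³)`, and `‖b - 1‖ < 1`
forces `‖b - 1‖ ≤ p⁻¹` since the norm takes values in `p ^ ℤ`.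
-/

namespace IsUltrametricDist

variable {K : Type*} [NormedField K] [IsUltrametricDist K]

lemma norm_add_eq_right_of_norm_lt {x y : K} (h : ‖x‖ < ‖y‖) : ‖x + y‖ = ‖y‖ := by
  rw [norm_add_eq_max_of_norm_ne_norm h.ne, max_eq_right h.le]

lemma norm_eq_one_of_norm_sub_one_lt_one {z : K} (hz : ‖z - 1‖ < 1) : ‖z‖ = 1 := by
  simpa using norm_add_eq_right_of_norm_lt (x := z - 1) (y := 1) (by simpa using hz)

lemma norm_mul_sub_one_lt_one {x y : K} (hx : ‖x - 1‖ < 1) (hy : ‖y - 1‖ < 1) :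
    ‖x * y - 1‖ < 1 := by
  have hxy : x * y - 1 = x * (y - 1) + (x - 1) := by ring
  rw [hxy]
  refine (norm_add_le_max _ _).trans_lt (max_lt ?_ hx)
  rwa [norm_mul, norm_eq_one_of_norm_sub_one_lt_one hx, one_mul]

lemma norm_sq_add_sq_eq_one (h2 : ‖(2 : K)‖ = 1) {b z : K} (hb : ‖b - 1‖ < 1)
    (hz : ‖z - 1‖ < 1) : ‖b ^ 2 + z ^ 2‖ = 1 := by
  have hsmall : ‖(b * b - 1) + (z * z - 1)‖ < ‖(2 : K)‖ := h2 ▸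
    (norm_add_le_max _ _).trans_lt
      (max_lt (norm_mul_sub_one_lt_one hb hb) (norm_mul_sub_one_lt_one hz hz))
  rw [← h2, ← norm_add_eq_right_of_norm_lt hsmall]
  ring_nf

lemma norm_pow_sub_one_le {b : K} (hb : ‖b‖ ≤ 1) (n : ℕ) : ‖b ^ n - 1‖ ≤ ‖b - 1‖ := by
  have hsum : ‖∑ i ∈ Finset.range n, b ^ i‖ ≤ 1 :=
    norm_sum_le_of_forall_le_of_nonneg zero_le_one fun i _ ↦ by
      simpa using pow_le_one₀ (norm_nonneg b) hb (n := i)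
  rw [← geom_sum_mul, norm_mul]
  exact mul_le_of_le_one_left (norm_nonneg _) hsum

lemma norm_sub_sq_ratio_le (h2 : ‖(2 : K)‖ = 1) {a b x y : K} (ha : ‖a‖ ≤ 1)
    (hb : ‖b - 1‖ < 1) (hx : ‖x - 1‖ < 1) (hy : ‖y - 1‖ < 1) :
    ‖a * (b ^ 2 * x ^ 2 + 1) / (b ^ 2 + x ^ 2) - a * (b ^ 2 * y ^ 2 + 1) / (b ^ 2 + y ^ 2)‖ ≤
      ‖b ^ 4 - 1‖ * ‖x - y‖ := by
  have hdx := norm_sq_add_sq_eq_one h2 hb hx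
  have hdy := norm_sq_add_sq_eq_one h2 hb hy
  have hsum : ‖x + y‖ ≤ 1 := (norm_add_le_max _ _).trans <| by
    simp [norm_eq_one_of_norm_sub_one_lt_one hx, norm_eq_one_of_norm_sub_one_lt_one hy]
  have key : a * (b ^ 2 * x ^ 2 + 1) / (b ^ 2 + x ^ 2) - a * (b ^ 2 * y ^ 2 + 1) / (b ^ 2 + y ^ 2) =
      a * (b ^ 4 - 1) * (x - y) * (x + y) / ((b ^ 2 + x ^ 2) * (b ^ 2 + y ^ 2)) := by
    have : b ^ 2 + x ^ 2 ≠ 0 := norm_ne_zero_iff.mp (by simp [hdx])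
    have : b ^ 2 + y ^ 2 ≠ 0 := norm_ne_zero_iff.mp (by simp [hdy])
    field_simp
    ring
  rw [key, norm_div, norm_mul, norm_mul, norm_mul, norm_mul, hdx, hdy, mul_one, div_one]
  calc ‖a‖ * ‖b ^ 4 - 1‖ * ‖x - y‖ * ‖x + y‖ ≤ 1 * ‖b ^ 4 - 1‖ * ‖x - y‖ * 1 := by gcongr
    _ = ‖b ^ 4 - 1‖ * ‖x - y‖ := by ring

end IsUltrametricDist

namespace Padic

variable {p : ℕ} [Fact p.Prime]

lemma norm_two_eq_one (hp : p ≠ 2) : ‖(2 : ℚ_[p])‖ = 1 := by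
  exact_mod_cast norm_natCast_eq_one_iff.mpr
    ((Nat.coprime_primes Fact.out Nat.prime_two).mpr hp)

lemma norm_le_inv_of_norm_lt_one {x : ℚ_[p]} (hx : ‖x‖ < 1) : ‖x‖ ≤ (p : ℝ)⁻¹ := by
  simpa using (norm_le_pow_iff_norm_lt_pow_add_one x (-1)).mpr (by simpa using hx)

end Padic

theorem stmt5 (p : ℕ) [Fact p.Prime] (hp : 3 ≤ p) (a b : ℚ_[p])
    (ha : ‖a - 1‖ < 1) (hb : ‖b - 1‖ < 1) (x y : ℚ_[p])
    (hx : ‖x - 1‖ < 1) (hy : ‖y - 1‖ < 1) :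
    ‖a * (b ^ 2 * x ^ 2 + 1) / (b ^ 2 + x ^ 2) -
      a * (b ^ 2 * y ^ 2 + 1) / (b ^ 2 + y ^ 2)‖ ≤ (p : ℝ)⁻¹ * ‖x - y‖ := by
  have h2 : ‖(2 : ℚ_[p])‖ = 1 := Padic.norm_two_eq_one (by omega)
  calc _ ≤ ‖b ^ 4 - 1‖ * ‖x - y‖ :=
        IsUltrametricDist.norm_sub_sq_ratio_le h2
          (IsUltrametricDist.norm_eq_one_of_norm_sub_one_lt_one ha).le hb hx hy
    _ ≤ ‖b - 1‖ * ‖x - y‖ := by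
        gcongr
        exact IsUltrametricDist.norm_pow_sub_one_le
          (IsUltrametricDist.norm_eq_one_of_norm_sub_one_lt_one hb).le 4
    _ ≤ (p : ℝ)⁻¹ * ‖x - y‖ := by gcongr; exact Padic.norm_le_inv_of_norm_lt_one hb
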